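/- In the stopping-cube setting, for every a ∈ ℤ and every x ∈ ℝ^N, Σ_{S ∈ 𝒮^a : x ∈ S} w(S∩Q)/|S| ≤ 2·M(w·1_Q)(x), where M denotes the Hardy–Littlewood maximal operator Mf(x) := sup{ ⨍_R |f| dy : R an axis-parallel cube with x ∈ R }. -/

import Mathlib

open MeasureTheory
open scoped ENNReal

noncomputable section

/-- Points of `ℝ^N` with the `ℓ^∞` (sup) metric, as `Fin N → ℝ`. -/
abbrev Euc (N : ℕ) := Fin N → ℝ

/-- The axis-parallel half-open cube with lower-left corner `c` and sidelength `l`. -/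
def cube {N : ℕ} (c : Euc N) (l : ℝ) : Set (Euc N) :=
  {x | ∀ i, c i ≤ x i ∧ x i < c i + l}

/-- Binary sequences `β = (β_j)_{j ∈ ℤ}` with `β_j ∈ {0,1}^N`, parametrising the
translated dyadic systems. -/
abbrev BSeq (N : ℕ) := ℤ → Fin N → Bool

/-- The translation `Σ_{j > k} 2^{-j} β_j` applied to dyadic cubes of sidelength `2^{-k}`. -/
def betaShift {N : ℕ} (β : BSeq N) (k : ℤ) : Euc N :=
  fun i => ∑' j : {j : ℤ // k < j}, (2 : ℝ) ^ (-(j : ℤ)) * (if β j i then 1 else 0)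

/-- The cube `I ∔ β` of the translated dyadic system `𝒟^β`, where `I ∈ 𝒟⁰` has
sidelength `2^{-k}` and lower-left corner `2^{-k}·p`, `p ∈ ℤ^N`. -/
def dyCube {N : ℕ} (β : BSeq N) (k : ℤ) (p : Fin N → ℤ) : Set (Euc N) :=
  cube (fun i => (p i : ℝ) * (2 : ℝ) ^ (-k) + betaShift β k i) ((2 : ℝ) ^ (-k))

/-- The data of a dyadic shift: for each dyadic cube (indexed by scale `k` and
position `p`) a kernel `a_K : ℝ^N × ℝ^N → ℝ`. -/
abbrev ShiftKernel (N : ℕ) := ℤ → (Fin N → ℤ) → Euc N → Euc N → ℝ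

/-- `a` is (the kernel family of) a dyadic shift with parameters `(u,v)` and constant `A`
on the dyadic system `𝒟^β`: each `a_K` is measurable, supported on `K × K`, bounded by `A`,
constant in `x` on dyadic cubes of sidelength `2^{-v-1}ℓ(K)` and constant in `y` on dyadic
cubes of sidelength `2^{-u-1}ℓ(K)`. -/
structure IsShift {N : ℕ} (β : BSeq N) (u v : ℕ) (A : ℝ) (a : ShiftKernel N) : Prop where
  meas : ∀ k p, Measurable (fun xy : Euc N × Euc N => a k p xy.1 xy.2)
  suppK : ∀ k p x y, a k p x y ≠ 0 → x ∈ dyCube β k p ∧ y ∈ dyCube β k p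
  bdd : ∀ k p x y, |a k p x y| ≤ A
  constX : ∀ k p p' x x' y, x ∈ dyCube β (k + v + 1) p' → x' ∈ dyCube β (k + v + 1) p' →
    a k p x y = a k p x' y
  constY : ∀ k p p' x y y', y ∈ dyCube β (k + u + 1) p' → y' ∈ dyCube β (k + u + 1) p' →
    a k p x y = a k p x y'

/-- The shift is finite: only finitely many of the kernels `a_K` are nonzero. -/
def ShiftFinite {N : ℕ} (a : ShiftKernel N) : Prop :=
  {kp : ℤ × (Fin N → ℤ) | ∃ x y, a kp.1 kp.2 x y ≠ 0}.Finite

/-- The dyadic shift operator `𝕊f(x) = Σ_K |K|⁻¹ ∫_K a_K(x,y) f(y) dy`. -/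
def shiftOp {N : ℕ} (β : BSeq N) (a : ShiftKernel N) (f : Euc N → ℝ) (x : Euc N) : ℝ :=
  ∑' kp : ℤ × (Fin N → ℤ),
    (((2 : ℝ) ^ (-kp.1)) ^ N)⁻¹ * ∫ y in dyCube β kp.1 kp.2, a kp.1 kp.2 x y * f y

/-- The shift restricted to a subcollection `𝒞` of dyadic cubes:
`𝕊_𝒞 f(x) = Σ_{K ∈ 𝒞} |K|⁻¹ ∫_K a_K(x,y) f(y) dy`. -/
def shiftOpOn {N : ℕ} (β : BSeq N) (C : Set (ℤ × (Fin N → ℤ))) (a : ShiftKernel N)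
    (f : Euc N → ℝ) (x : Euc N) : ℝ :=
  ∑' kp : C,
    (((2 : ℝ) ^ (-(kp : ℤ × (Fin N → ℤ)).1)) ^ N)⁻¹ *
      ∫ y in dyCube β (kp : ℤ × (Fin N → ℤ)).1 (kp : ℤ × (Fin N → ℤ)).2,
        a (kp : ℤ × (Fin N → ℤ)).1 (kp : ℤ × (Fin N → ℤ)).2 x y * f y

/-- The shift is good with goodness parameter `γ`: nonvanishing of `a_K(x,y)` forces
`dist(x, ∂K) ≥ 2^{-1-vγ} ℓ(K)` and `dist(y, ∂K) ≥ 2^{-1-uγ} ℓ(K)` (`ℓ^∞` distances). -/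
def IsGoodShift {N : ℕ} (β : BSeq N) (γ : ℝ) (u v : ℕ) (a : ShiftKernel N) : Prop :=
  ∀ k p x y, a k p x y ≠ 0 →
    (2 : ℝ) ^ (-1 - (v : ℝ) * γ) * (2 : ℝ) ^ (-k) ≤
        Metric.infDist x (frontier (dyCube β k p)) ∧
      (2 : ℝ) ^ (-1 - (u : ℝ) * γ) * (2 : ℝ) ^ (-k) ≤
        Metric.infDist y (frontier (dyCube β k p))

/-- The shift is bounded on (unweighted) `L²` with norm at most `A`. -/
def ShiftL2Bounded {N : ℕ} (β : BSeq N) (A : ℝ) (a : ShiftKernel N) : Prop :=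
  ∀ h : Euc N → ℝ, MemLp h 2 volume →
    ∫⁻ x, ENNReal.ofReal ((shiftOp β a h x) ^ 2) ≤
      ENNReal.ofReal (A ^ 2) * ∫⁻ x, ENNReal.ofReal ((h x) ^ 2)

/-- The set of all local `A₂` products `(⨍_Q w)(⨍_Q w⁻¹)` over axis-parallel cubes `Q`. -/
def A2set {N : ℕ} (w : Euc N → ℝ) : Set ℝ :=
  {t | ∃ (c : Euc N) (l : ℝ), 0 < l ∧
    t = (⨍ x in cube c l, w x) * (⨍ x in cube c l, (w x)⁻¹)}

/-- The `A₂` characteristic `[w]_{A₂} = sup_Q (⨍_Q w)(⨍_Q w⁻¹)`. -/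
def A2const {N : ℕ} (w : Euc N → ℝ) : ℝ := sSup (A2set w)

/-- `w` is an `A₂` weight: positive, with `w` and `w⁻¹` locally integrable, and with
finite `A₂` characteristic (the set of local `A₂` products is bounded above). -/
structure IsA2Weight {N : ℕ} (w : Euc N → ℝ) : Prop where
  meas : Measurable w
  pos : ∀ x, 0 < w x
  locInt : LocallyIntegrable w volume
  locIntInv : LocallyIntegrable (fun x => (w x)⁻¹) volume
  bddA2 : BddAbove (A2set w)

/-- The inner part `K̂` of a dyadic cube: points at `ℓ^∞`-distance at least
`2^{-max(u,v)γ} ℓ(K)` from `∂K`. -/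
def hatCube {N : ℕ} (β : BSeq N) (u v : ℕ) (γ : ℝ) (k : ℤ) (p : Fin N → ℤ) :
    Set (Euc N) :=
  {x ∈ dyCube β k p |
    (2:ℝ) ^ (-(max u v : ℝ) * γ) * (2:ℝ) ^ (-k) ≤
      Metric.infDist x (frontier (dyCube β k p))}

/-- The collection `𝒦`: dyadic cubes `K` with `K̂ ∩ Q ≠ ∅` and `ℓ(K) < ℓ(Q)`, whose
sidelengths lie in the residue class `ρ` of `log₂ ℓ(K) mod (v+1)`. Here `Q` is the cube
with corner `Qc` and sidelength `Ql`. -/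
def calK {N : ℕ} (β : BSeq N) (u v : ℕ) (γ : ℝ) (Qc : Euc N) (Ql : ℝ) (ρ : ℤ) :
    Set (ℤ × (Fin N → ℤ)) :=
  {kp | (hatCube β u v γ kp.1 kp.2 ∩ cube Qc Ql).Nonempty ∧ (2:ℝ) ^ (-kp.1) < Ql ∧
    ((v : ℤ) + 1) ∣ (kp.1 - ρ)}

/-- The ratio `w(K ∩ Q)/|K|` for the dyadic cube `K` indexed by `kp`. -/
def wRatio {N : ℕ} (β : BSeq N) (w : Euc N → ℝ) (Qc : Euc N) (Ql : ℝ)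
    (kp : ℤ × (Fin N → ℤ)) : ℝ :=
  (∫ x in dyCube β kp.1 kp.2 ∩ cube Qc Ql, w x) / ((2:ℝ) ^ (-kp.1)) ^ N

/-- The ratio `σ(K)/|K|`, `σ := w⁻¹`, for the dyadic cube `K` indexed by `kp`. -/
def sigRatio {N : ℕ} (β : BSeq N) (w : Euc N → ℝ) (kp : ℤ × (Fin N → ℤ)) : ℝ :=
  (∫ x in dyCube β kp.1 kp.2, (w x)⁻¹) / ((2:ℝ) ^ (-kp.1)) ^ N

/-- The collection `𝒦^a`: cubes of `𝒦` with local `A₂` product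
`(w(K∩Q)/|K|)(σ(K)/|K|)` in `(2^a, 2^{a+1}]`. -/
def calKa {N : ℕ} (β : BSeq N) (u v : ℕ) (γ : ℝ) (w : Euc N → ℝ) (Qc : Euc N) (Ql : ℝ)
    (ρ : ℤ) (a : ℤ) : Set (ℤ × (Fin N → ℤ)) :=
  {kp ∈ calK β u v γ Qc Ql ρ |
    (2:ℝ) ^ a < wRatio β w Qc Ql kp * sigRatio β w kp ∧
      wRatio β w Qc Ql kp * sigRatio β w kp ≤ (2:ℝ) ^ (a + 1)}

/-- The generations `𝒮^a_n` of stopping cubes: `𝒮^a_0` are the maximal cubes of `𝒦^a`,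
and `𝒮^a_{n+1}` the maximal `K ∈ 𝒦^a` with `w(K∩Q)/|K| > 4·w(S∩Q)/|S|` for some
`S ∈ 𝒮^a_n` strictly containing `K`. -/
def stopFam {N : ℕ} (β : BSeq N) (u v : ℕ) (γ : ℝ) (w : Euc N → ℝ) (Qc : Euc N)
    (Ql : ℝ) (ρ : ℤ) (a : ℤ) : ℕ → Set (ℤ × (Fin N → ℤ))
  | 0 =>
    {kp ∈ calKa β u v γ w Qc Ql ρ a |
      ∀ kp' ∈ calKa β u v γ w Qc Ql ρ a,
        dyCube β kp.1 kp.2 ⊆ dyCube β kp'.1 kp'.2 →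
          dyCube β kp'.1 kp'.2 = dyCube β kp.1 kp.2}
  | (n + 1) =>
    {kp | (kp ∈ calKa β u v γ w Qc Ql ρ a ∧
        ∃ s ∈ stopFam β u v γ w Qc Ql ρ a n,
          dyCube β kp.1 kp.2 ⊂ dyCube β s.1 s.2 ∧
            4 * wRatio β w Qc Ql s < wRatio β w Qc Ql kp) ∧
      ∀ kp', (kp' ∈ calKa β u v γ w Qc Ql ρ a ∧
          ∃ s ∈ stopFam β u v γ w Qc Ql ρ a n,
            dyCube β kp'.1 kp'.2 ⊂ dyCube β s.1 s.2 ∧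
              4 * wRatio β w Qc Ql s < wRatio β w Qc Ql kp') →
        dyCube β kp.1 kp.2 ⊆ dyCube β kp'.1 kp'.2 →
          dyCube β kp'.1 kp'.2 = dyCube β kp.1 kp.2}

/-- The full stopping family `𝒮^a = ⋃_n 𝒮^a_n`. -/
def stopSet {N : ℕ} (β : BSeq N) (u v : ℕ) (γ : ℝ) (w : Euc N → ℝ) (Qc : Euc N)
    (Ql : ℝ) (ρ : ℤ) (a : ℤ) : Set (ℤ × (Fin N → ℤ)) :=
  ⋃ n : ℕ, stopFam β u v γ w Qc Ql ρ a n

/-- The collection `𝒦^a(S)` of cubes of `𝒦^a` whose minimal stopping cube is `S`. -/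
def calKaS {N : ℕ} (β : BSeq N) (u v : ℕ) (γ : ℝ) (w : Euc N → ℝ) (Qc : Euc N)
    (Ql : ℝ) (ρ : ℤ) (a : ℤ) (s : ℤ × (Fin N → ℤ)) : Set (ℤ × (Fin N → ℤ)) :=
  {kp ∈ calKa β u v γ w Qc Ql ρ a |
    dyCube β kp.1 kp.2 ⊆ dyCube β s.1 s.2 ∧
      ∀ s' ∈ stopSet β u v γ w Qc Ql ρ a,
        dyCube β kp.1 kp.2 ⊆ dyCube β s'.1 s'.2 →
          dyCube β s.1 s.2 ⊆ dyCube β s'.1 s'.2}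

/-- The collection `𝒦^a_b(S)` of cubes `K ∈ 𝒦^a(S)` with
`2^{1-b} w(S∩Q)/|S| < w(K∩Q)/|K| ≤ 2^{2-b} w(S∩Q)/|S|`. -/
def calKaSb {N : ℕ} (β : BSeq N) (u v : ℕ) (γ : ℝ) (w : Euc N → ℝ) (Qc : Euc N)
    (Ql : ℝ) (ρ : ℤ) (a : ℤ) (s : ℤ × (Fin N → ℤ)) (b : ℕ) : Set (ℤ × (Fin N → ℤ)) :=
  {kp ∈ calKaS β u v γ w Qc Ql ρ a s |
    (2:ℝ) ^ (1 - (b : ℤ)) * wRatio β w Qc Ql s < wRatio β w Qc Ql kp ∧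
      wRatio β w Qc Ql kp ≤ (2:ℝ) ^ (2 - (b : ℤ)) * wRatio β w Qc Ql s}

/-- The Hardy–Littlewood maximal function over axis-parallel cubes (with values
in `[0,∞]`). -/
def maximalFn {N : ℕ} (f : Euc N → ℝ) (x : Euc N) : ℝ≥0∞ :=
  ⨆ (c : Euc N) (l : ℝ) (_ : 0 < l) (_ : x ∈ cube c l),
    ENNReal.ofReal (⨍ y in cube c l, |f y|)

/-! Two stopping cubes of the same generation that contain `x` are nested dyadic cubes and both
are maximal, so they coincide: each generation contributes at most one cube `S_n ∋ x`. Along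
the chain `S_0 ⊋ S_1 ⊋ ⋯` the ratios `w(S_n ∩ Q)/|S_n|` at least quadruple, so every partial
sum is at most twice its last term, and each term is an average of `|w·1_Q|` over a cube
containing `x`, hence at most `M(w·1_Q)(x)`. -/

section Cubes

variable {N : ℕ}

lemma cube_eq_pi (c : Euc N) (l : ℝ) :
    cube c l = Set.pi Set.univ (fun i => Set.Ico (c i) (c i + l)) := by
  ext x; simp [cube, Set.mem_pi, Set.mem_Ico]

lemma measurableSet_cube (c : Euc N) (l : ℝ) : MeasurableSet (cube c l) := by
  rw [cube_eq_pi]; exact MeasurableSet.univ_pi fun i => measurableSet_Ico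

lemma volume_cube (c : Euc N) (l : ℝ) : volume (cube c l) = ENNReal.ofReal l ^ N := by
  rw [cube_eq_pi, volume_pi_pi]
  simp [Real.volume_Ico]

lemma cube_injective (hN : 0 < N) {c c' : Euc N} {l l' : ℝ} (hl : 0 < l) (hl' : 0 < l')
    (h : cube c l = cube c' l') : c = c' ∧ l = l' := by
  have corner_mem : ∀ (c₀ : Euc N) (l₀ : ℝ), 0 < l₀ → c₀ ∈ cube c₀ l₀ :=
    fun c₀ l₀ h₀ i => ⟨le_rfl, by linarith⟩
  have h₁ : c ∈ cube c' l' := h ▸ corner_mem c l hl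
  have h₂ : c' ∈ cube c l := h.symm ▸ corner_mem c' l' hl'
  obtain rfl : c = c' := funext fun i => le_antisymm (h₂ i).1 (h₁ i).1
  refine ⟨rfl, le_antisymm ?_ ?_⟩ <;> by_contra! hlt
  · have hmem : (fun i => c i + l') ∈ cube c l := fun i => ⟨by linarith, by linarith⟩
    exact lt_irrefl _ ((h ▸ hmem) ⟨0, hN⟩).2
  · have hmem : (fun i => c i + l) ∈ cube c l' := fun i => ⟨by linarith, by linarith⟩
    exact lt_irrefl _ ((h ▸ hmem) ⟨0, hN⟩).2

end Cubes

section Dyadic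

variable {N : ℕ}

lemma summable_betaShift_terms (β : BSeq N) (i : Fin N) (k : ℤ) :
    Summable fun n : ℕ =>
      (2:ℝ) ^ (-(k + 1 + n)) * (if β (k + 1 + n) i then 1 else 0) := by
  refine Summable.of_nonneg_of_le (fun n => by positivity) (fun n => ?_)
    ((summable_geometric_two).mul_left ((2:ℝ) ^ (-(k + 1))))
  have hpow : (2:ℝ) ^ (-(k + 1 + n)) = (2:ℝ) ^ (-(k + 1)) * (1 / 2) ^ n := by
    rw [neg_add, zpow_add₀ two_ne_zero, zpow_neg (2:ℝ) (n:ℤ), zpow_natCast, one_div, inv_pow]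
  rw [hpow]
  exact mul_le_of_le_one_right (by positivity) (by split <;> norm_num)

lemma betaShift_eq_tsum_nat (β : BSeq N) (k : ℤ) (i : Fin N) :
    betaShift β k i =
      ∑' n : ℕ, (2:ℝ) ^ (-(k + 1 + n)) * (if β (k + 1 + n) i then 1 else 0) := by
  let e : ℕ ≃ {j : ℤ // k < j} :=
    { toFun := fun n => ⟨k + 1 + n, by omega⟩
      invFun := fun j => (j.1 - (k + 1)).toNat
      left_inv := fun n => by simp
      right_inv := fun j => Subtype.ext (by have := j.2; simp; omega) }
  rw [betaShift, ← e.tsum_eq]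
  rfl

lemma betaShift_eq_add_betaShift_succ (β : BSeq N) (k : ℤ) (i : Fin N) :
    betaShift β k i =
      (2:ℝ) ^ (-(k + 1)) * (if β (k + 1) i then 1 else 0) + betaShift β (k + 1) i := by
  rw [betaShift_eq_tsum_nat, (summable_betaShift_terms β i k).tsum_eq_zero_add,
    betaShift_eq_tsum_nat]
  push_cast
  simp only [add_zero, add_assoc, add_comm (1 : ℤ)]

lemma exists_betaShift_eq_intCast_mul_add (β : BSeq N) (i : Fin N) {k k' : ℤ} (hk : k ≤ k') :
    ∃ m : ℤ, betaShift β k i = m * (2:ℝ) ^ (-k') + betaShift β k' i := by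
  induction k', hk using Int.leInduction with
  | base => exact ⟨0, by simp⟩
  | succ n _ ih =>
    obtain ⟨m, hm⟩ := ih
    refine ⟨2 * m + if β (n + 1) i then 1 else 0, ?_⟩
    have hpow : (2:ℝ) ^ (-n) = 2 * (2:ℝ) ^ (-(n + 1)) := by
      rw [neg_add, zpow_add₀ two_ne_zero, zpow_neg_one]; ring
    rw [hm, betaShift_eq_add_betaShift_succ β n i, hpow]
    split <;> push_cast <;> ring

lemma mem_dyCube_iff {β : BSeq N} {k : ℤ} {p : Fin N → ℤ} {x : Euc N} :
    x ∈ dyCube β k p ↔ ∀ i, ⌊(x i - betaShift β k i) / (2:ℝ) ^ (-k)⌋ = p i := by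
  refine forall_congr' fun i => ?_
  have hL : (0:ℝ) < (2:ℝ) ^ (-k) := by positivity
  rw [Int.floor_eq_iff, le_div_iff₀ hL, div_lt_iff₀ hL, add_mul, one_mul]
  constructor <;> rintro ⟨h₁, h₂⟩ <;> constructor <;> linarith

lemma dyCube_subset_of_le (β : BSeq N) {k k' : ℤ} (hk : k ≤ k') {p p' : Fin N → ℤ}
    {z : Euc N} (hz : z ∈ dyCube β k p) (hz' : z ∈ dyCube β k' p') :
    dyCube β k' p' ⊆ dyCube β k p := by
  intro y hy
  rw [mem_dyCube_iff] at hz hz' hy ⊢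
  intro i
  obtain ⟨m, hm⟩ := exists_betaShift_eq_intCast_mul_add β i hk
  set D : ℕ := 2 ^ (k' - k).toNat
  have hD : (2:ℝ) ^ (-k) = (2:ℝ) ^ (-k') * D := by
    rw [Nat.cast_pow, Nat.cast_ofNat, ← zpow_natCast, ← zpow_add₀ two_ne_zero]
    congr 1; omega
  -- the shifts differ by `m·2^(-k')` and `D = 2^(k'-k)` is an integer, so the coarse index
  -- is a function of the fine one
  have coarse_index : ∀ t : ℝ, ⌊(t - betaShift β k i) / (2:ℝ) ^ (-k)⌋ =
      (⌊(t - betaShift β k' i) / (2:ℝ) ^ (-k')⌋ - m) / D := by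
    intro t
    rw [← Int.floor_sub_intCast, ← Int.floor_div_natCast, hm, hD]
    congr 1
    field_simp
    ring
  rw [coarse_index, hy, ← hz', ← coarse_index, hz]

lemma dyCube_subset_or_subset (β : BSeq N) {k k' : ℤ} {p p' : Fin N → ℤ} {z : Euc N}
    (hz : z ∈ dyCube β k p) (hz' : z ∈ dyCube β k' p') :
    dyCube β k p ⊆ dyCube β k' p' ∨ dyCube β k' p' ⊆ dyCube β k p := by
  rcases le_total k k' with h | h
  · exact Or.inr (dyCube_subset_of_le β h hz hz')
  · exact Or.inl (dyCube_subset_of_le β h hz' hz)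

lemma dyCube_injective (hN : 0 < N) (β : BSeq N) {k k' : ℤ} {p p' : Fin N → ℤ}
    (h : dyCube β k p = dyCube β k' p') : k = k' ∧ p = p' := by
  obtain ⟨hc, hl⟩ := cube_injective hN (by positivity) (by positivity) h
  obtain rfl : k = k' := neg_inj.mp (zpow_right_injective₀ zero_lt_two (by norm_num) hl)
  refine ⟨rfl, funext fun i => ?_⟩
  have hi := add_right_cancel (congrFun hc i)
  exact_mod_cast mul_right_cancel₀ (by positivity : (2:ℝ) ^ (-k) ≠ 0) hi

-- In dimension `0` every dyadic cube is the whole space, with empty frontier, and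
-- `infDist` to the empty set is `0`.
lemma hatCube_eq_empty_of_dim_zero (β : BSeq 0) (u v : ℕ) (γ : ℝ) (k : ℤ) (p : Fin 0 → ℤ) :
    hatCube β u v γ k p = ∅ := by
  refine Set.eq_empty_of_forall_notMem fun y hy => ?_
  have huniv : dyCube β k p = Set.univ := Set.eq_univ_of_forall fun z i => i.elim0
  have hdist := hy.2
  rw [huniv, frontier_univ, Metric.infDist_empty] at hdist
  exact (hdist.trans_lt' (by positivity)).false

end Dyadic

lemma tsum_le_two_mul_of_doubling {g : ℕ → ℝ≥0∞} {M : ℝ≥0∞} {alive : ℕ → Prop}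
    (hdead : ∀ n, ¬ alive n → g n = 0)
    (hstep : ∀ n, alive (n + 1) → alive n ∧ 2 * g n ≤ g (n + 1))
    (hM : ∀ n, g n ≤ M) : ∑' n, g n ≤ 2 * M := by
  have partial_le : ∀ n, alive n → ∑ i ∈ Finset.range (n + 1), g i ≤ 2 * g n := by
    intro n
    induction n with
    | zero => intro _; simpa using le_mul_of_one_le_left zero_le one_le_two
    | succ n ih =>
      intro hn
      obtain ⟨hn', hdouble⟩ := hstep n hn
      calc ∑ i ∈ Finset.range (n + 2), g i
          = ∑ i ∈ Finset.range (n + 1), g i + g (n + 1) := Finset.sum_range_succ _ _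
        _ ≤ g (n + 1) + g (n + 1) := add_le_add_left ((ih hn').trans hdouble) _
        _ = 2 * g (n + 1) := (two_mul _).symm
  rw [ENNReal.tsum_eq_iSup_nat]
  refine iSup_le fun n => ?_
  induction n with
  | zero => simp
  | succ n ih =>
    by_cases hn : alive n
    · exact (partial_le n hn).trans (by gcongr; exact hM n)
    · rwa [Finset.sum_range_succ, hdead n hn, add_zero]

lemma ofReal_wRatio_le_maximalFn {N : ℕ} (β : BSeq N) (w : Euc N → ℝ) (Qc : Euc N) (Ql : ℝ)
    {kp : ℤ × (Fin N → ℤ)} {x : Euc N} (hx : x ∈ dyCube β kp.1 kp.2) :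
    ENNReal.ofReal (wRatio β w Qc Ql kp) ≤ maximalFn ((cube Qc Ql).indicator w) x := by
  set f := (cube Qc Ql).indicator w
  have hl : (0:ℝ) < (2:ℝ) ^ (-kp.1) := by positivity
  have hwRatio_le : wRatio β w Qc Ql kp ≤ ⨍ y in dyCube β kp.1 kp.2, |f y| := by
    rw [setAverage_eq, measureReal_def, dyCube, volume_cube, ENNReal.toReal_pow,
      ENNReal.toReal_ofReal hl.le, smul_eq_mul, inv_mul_eq_div, wRatio,
      ← setIntegral_indicator (measurableSet_cube Qc Ql)]
    gcongr
    exact (le_abs_self _).trans abs_integral_le_integral_abs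
  refine (ENNReal.ofReal_le_ofReal hwRatio_le).trans ?_
  exact le_iSup_of_le _ (le_iSup_of_le _ (le_iSup_of_le hl (le_iSup_of_le hx le_rfl)))

section Stopping

variable {N : ℕ} (β : BSeq N) (u v : ℕ) (γ : ℝ) (w : Euc N → ℝ) (Qc : Euc N) (Ql : ℝ)
  (ρ a : ℤ)

lemma stopFam_subset_calKa (n : ℕ) :
    stopFam β u v γ w Qc Ql ρ a n ⊆ calKa β u v γ w Qc Ql ρ a := by
  intro kp h
  cases n with
  | zero => exact h.1
  | succ n => exact h.1.1

lemma stopFam_maximal {n : ℕ} {kp kp' : ℤ × (Fin N → ℤ)}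
    (h : kp ∈ stopFam β u v γ w Qc Ql ρ a n) (h' : kp' ∈ stopFam β u v γ w Qc Ql ρ a n)
    (hsub : dyCube β kp.1 kp.2 ⊆ dyCube β kp'.1 kp'.2) :
    dyCube β kp'.1 kp'.2 = dyCube β kp.1 kp.2 := by
  cases n with
  | zero => exact h.2 kp' h'.1 hsub
  | succ n => exact h.2 kp' h'.1 hsub

def stopCubesAt (n : ℕ) (x : Euc N) : Set (ℤ × (Fin N → ℤ)) :=
  {kp | kp ∈ stopFam β u v γ w Qc Ql ρ a n ∧ x ∈ dyCube β kp.1 kp.2}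

lemma stopCubesAt_subsingleton (n : ℕ) (x : Euc N) :
    (stopCubesAt β u v γ w Qc Ql ρ a n x).Subsingleton := by
  rintro kp ⟨h, hx⟩ kp' ⟨h', hx'⟩
  rcases Nat.eq_zero_or_pos N with rfl | hN
  · obtain ⟨y, hy, -⟩ := (stopFam_subset_calKa β u v γ w Qc Ql ρ a n h).1.1
    simp [hatCube_eq_empty_of_dim_zero] at hy
  have heq : dyCube β kp.1 kp.2 = dyCube β kp'.1 kp'.2 := by
    rcases dyCube_subset_or_subset β hx hx' with hs | hs
    · exact (stopFam_maximal β u v γ w Qc Ql ρ a h h' hs).symm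
    · exact stopFam_maximal β u v γ w Qc Ql ρ a h' h hs
  obtain ⟨hk, hp⟩ := dyCube_injective hN β heq
  exact Prod.ext hk hp

lemma setOf_mem_stopSet_eq_iUnion_stopCubesAt (x : Euc N) :
    {kp | kp ∈ stopSet β u v γ w Qc Ql ρ a ∧ x ∈ dyCube β kp.1 kp.2} =
      ⋃ n, stopCubesAt β u v γ w Qc Ql ρ a n x := by
  ext kp
  simp [stopSet, stopCubesAt]

lemma exists_stopCubesAt_parent {n : ℕ} {x : Euc N} {kp : ℤ × (Fin N → ℤ)}
    (h : kp ∈ stopCubesAt β u v γ w Qc Ql ρ a (n + 1) x) :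
    ∃ s ∈ stopCubesAt β u v γ w Qc Ql ρ a n x,
      4 * wRatio β w Qc Ql s < wRatio β w Qc Ql kp := by
  obtain ⟨s, hs, hsub, hlt⟩ := h.1.1.2
  exact ⟨s, ⟨hs, hsub.subset h.2⟩, hlt⟩

lemma tsum_stopCubesAt_eq {n : ℕ} {x : Euc N} {kp : ℤ × (Fin N → ℤ)}
    (h : kp ∈ stopCubesAt β u v γ w Qc Ql ρ a n x) :
    ∑' s : stopCubesAt β u v γ w Qc Ql ρ a n x, ENNReal.ofReal (wRatio β w Qc Ql s) =
      ENNReal.ofReal (wRatio β w Qc Ql kp) := by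
  rw [(stopCubesAt_subsingleton β u v γ w Qc Ql ρ a n x).eq_singleton_of_mem h]
  exact tsum_singleton kp fun s => ENNReal.ofReal (wRatio β w Qc Ql s)

lemma tsum_stopCubesAt_le_maximalFn (n : ℕ) (x : Euc N) :
    ∑' s : stopCubesAt β u v γ w Qc Ql ρ a n x, ENNReal.ofReal (wRatio β w Qc Ql s) ≤
      maximalFn ((cube Qc Ql).indicator w) x := by
  rcases (stopCubesAt β u v γ w Qc Ql ρ a n x).eq_empty_or_nonempty with h | ⟨kp, h⟩
  · simp [h]
  · rw [tsum_stopCubesAt_eq β u v γ w Qc Ql ρ a h]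
    exact ofReal_wRatio_le_maximalFn β w Qc Ql h.2

lemma two_mul_tsum_stopCubesAt_le_succ {n : ℕ} {x : Euc N}
    (h : (stopCubesAt β u v γ w Qc Ql ρ a (n + 1) x).Nonempty) :
    (stopCubesAt β u v γ w Qc Ql ρ a n x).Nonempty ∧
      2 * ∑' s : stopCubesAt β u v γ w Qc Ql ρ a n x, ENNReal.ofReal (wRatio β w Qc Ql s) ≤
        ∑' s : stopCubesAt β u v γ w Qc Ql ρ a (n + 1) x,
          ENNReal.ofReal (wRatio β w Qc Ql s) := by
  obtain ⟨kp, hkp⟩ := h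
  obtain ⟨s, hs, hlt⟩ := exists_stopCubesAt_parent β u v γ w Qc Ql ρ a hkp
  refine ⟨⟨s, hs⟩, ?_⟩
  rw [tsum_stopCubesAt_eq β u v γ w Qc Ql ρ a hs, tsum_stopCubesAt_eq β u v γ w Qc Ql ρ a hkp]
  calc 2 * ENNReal.ofReal (wRatio β w Qc Ql s)
      ≤ 4 * ENNReal.ofReal (wRatio β w Qc Ql s) := by gcongr; norm_num
    _ = ENNReal.ofReal (4 * wRatio β w Qc Ql s) := by
      rw [ENNReal.ofReal_mul zero_le_four, ENNReal.ofReal_ofNat]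
    _ ≤ ENNReal.ofReal (wRatio β w Qc Ql kp) := ENNReal.ofReal_le_ofReal hlt.le

end Stopping

theorem statement_17_general (N : ℕ) (β : BSeq N) (u v : ℕ) (γ : ℝ) (w : Euc N → ℝ) (Qc : Euc N)
    (Ql : ℝ) (ρ : ℤ) (a : ℤ) (x : Euc N) :
    ∑' s : {kp // kp ∈ stopSet β u v γ w Qc Ql ρ a ∧ x ∈ dyCube β kp.1 kp.2},
        ENNReal.ofReal (wRatio β w Qc Ql (s : ℤ × (Fin N → ℤ)))
      ≤ 2 * maximalFn ((cube Qc Ql).indicator w) x := by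
  set T := fun n => stopCubesAt β u v γ w Qc Ql ρ a n x
  set f := fun kp => ENNReal.ofReal (wRatio β w Qc Ql kp)
  calc ∑' s : {kp // kp ∈ stopSet β u v γ w Qc Ql ρ a ∧ x ∈ dyCube β kp.1 kp.2}, f s
      = ∑' s : ↥(⋃ n, T n), f s :=
        tsum_congr_set_coe f (setOf_mem_stopSet_eq_iUnion_stopCubesAt β u v γ w Qc Ql ρ a x)
    _ ≤ ∑' n, ∑' s : T n, f s := ENNReal.tsum_iUnion_le_tsum f T
    _ ≤ 2 * maximalFn ((cube Qc Ql).indicator w) x :=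
      tsum_le_two_mul_of_doubling (alive := fun n => (T n).Nonempty)
        (fun n hn => by rw [Set.not_nonempty_iff_eq_empty.mp hn, tsum_empty])
        (fun _ => two_mul_tsum_stopCubesAt_le_succ β u v γ w Qc Ql ρ a)
        (fun n => tsum_stopCubesAt_le_maximalFn β u v γ w Qc Ql ρ a n x)

/-- at every point, the sum of the ratios `w(S∩Q)/|S|` over the stopping
cubes containing the point is dominated by twice the maximal function of `w·1_Q`. -/
theorem statement_17 (N : ℕ) (β : BSeq N) (u v : ℕ) (γ : ℝ) (hγ0 : 0 < γ)
    (hγ2 : γ < 1/2) (w : Euc N → ℝ) (hw : IsA2Weight w) (Qc : Euc N) (Ql : ℝ)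
    (hQl : 0 < Ql) (ρ : ℤ) (a : ℤ) (x : Euc N) :
    ∑' s : {kp // kp ∈ stopSet β u v γ w Qc Ql ρ a ∧ x ∈ dyCube β kp.1 kp.2},
        ENNReal.ofReal (wRatio β w Qc Ql (s : ℤ × (Fin N → ℤ)))
      ≤ 2 * maximalFn ((cube Qc Ql).indicator w) x :=
  statement_17_general N β u v γ w Qc Ql ρ a x
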